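/- arXiv:2409.18510 — 3 statements merged into one kernel-verified Lean document; each statement's English description precedes it below -/
import Mathlib

section
/- Let G be a finite 4-regular simple graph. Then γ_{r2}(G) ≥ |V(G)|/3. -/
open SimpleGraph Finset

/-- `f` is a `k`-rainbow dominating function of `G`: every vertex with empty label
sees all `k` colors in its open neighborhood. -/
def IsRainbowDominating {V : Type*} (G : SimpleGraph V) (k : ℕ)
    (f : V → Finset (Fin k)) : Prop :=
  ∀ v, f v = ∅ → ∀ c : Fin k, ∃ u, G.Adj v u ∧ c ∈ f u

/-- The `k`-rainbow domination number: the minimum weight of a `k`-rainbow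
dominating function. -/
noncomputable def rainbowDomNum {V : Type*} [Fintype V] (G : SimpleGraph V) (k : ℕ) : ℕ :=
  sInf {w | ∃ f : V → Finset (Fin k), IsRainbowDominating G k f ∧ w = ∑ v, (f v).card}

/-!
Let `S` be the set of vertices with empty label. Each vertex outside `S` carries weight at
least `1`, so `n - |S| ≤ w(f)`. Each vertex of `S` sees `k` colours among its neighbours, and
in a `d`-regular graph every label is seen by exactly `d` vertices, so `k |S| ≤ d w(f)`.
Hence `k n ≤ (d + k) w(f)`; for `k = 2`, `d = 4` this is `n ≤ 3 w(f)`.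
-/

namespace SimpleGraph

variable {V : Type*} [Fintype V] (G : SimpleGraph V) [DecidableRel G.Adj]

theorem sum_sum_neighborFinset (g : V → ℕ) :
    ∑ v, ∑ u ∈ G.neighborFinset v, g u = ∑ u, G.degree u * g u := by
  rw [sum_comm' (t' := univ) (s' := fun u => G.neighborFinset u) (fun v u => by
    simp only [mem_univ, true_and, and_true, mem_neighborFinset, G.adj_comm])]
  simp only [sum_const, smul_eq_mul, card_neighborFinset_eq_degree]

theorem IsRegularOfDegree.sum_sum_neighborFinset {d : ℕ} (hreg : G.IsRegularOfDegree d)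
    (g : V → ℕ) : ∑ v, ∑ u ∈ G.neighborFinset v, g u = d * ∑ u, g u := by
  simp only [G.sum_sum_neighborFinset, hreg.degree_eq, mul_sum]

end SimpleGraph

section RainbowDomination

variable {V : Type*} {G : SimpleGraph V} {k : ℕ} {f : V → Finset (Fin k)}

theorem card_filter_ne_empty_le_sum_card [Fintype V] [DecidablePred fun v => f v = ∅] :
    #{v | f v ≠ ∅} ≤ ∑ v, (f v).card :=
  calc #{v | f v ≠ ∅} = ∑ v with f v ≠ ∅, 1 := by rw [card_eq_sum_ones]
    _ ≤ ∑ v with f v ≠ ∅, (f v).card :=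
      sum_le_sum fun v hv => card_pos.2 (nonempty_iff_ne_empty.2 (mem_filter.1 hv).2)
    _ ≤ ∑ v, (f v).card := sum_le_sum_of_subset (subset_univ _)

theorem IsRainbowDominating.le_sum_card_neighborFinset (hf : IsRainbowDominating G k f)
    {v : V} [Fintype (G.neighborSet v)] (hv : f v = ∅) :
    k ≤ ∑ u ∈ G.neighborFinset v, (f u).card := by
  classical
  have hcover : univ ⊆ (G.neighborFinset v).biUnion f := fun c _ => by
    obtain ⟨u, hu, hc⟩ := hf v hv c
    exact mem_biUnion.2 ⟨u, (G.mem_neighborFinset v u).2 hu, hc⟩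
  calc k = #(univ : Finset (Fin k)) := (card_fin k).symm
    _ ≤ #((G.neighborFinset v).biUnion f) := card_le_card hcover
    _ ≤ ∑ u ∈ G.neighborFinset v, (f u).card := card_biUnion_le

theorem IsRainbowDominating.mul_card_le [Fintype V] [DecidableRel G.Adj] {d : ℕ}
    (hreg : G.IsRegularOfDegree d) (hf : IsRainbowDominating G k f) :
    k * Fintype.card V ≤ (d + k) * ∑ v, (f v).card := by
  classical
  set S : Finset V := {v | f v = ∅}
  have hS : k * #S ≤ d * ∑ v, (f v).card :=
    calc k * #S = ∑ _v ∈ S, k := by rw [sum_const, smul_eq_mul, mul_comm]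
      _ ≤ ∑ v ∈ S, ∑ u ∈ G.neighborFinset v, (f u).card :=
        sum_le_sum fun v hv => hf.le_sum_card_neighborFinset (mem_filter.1 hv).2
      _ ≤ ∑ v, ∑ u ∈ G.neighborFinset v, (f u).card := sum_le_sum_of_subset (subset_univ _)
      _ = d * ∑ v, (f v).card := hreg.sum_sum_neighborFinset _ _
  have hSc : #Sᶜ ≤ ∑ v, (f v).card := by
    simpa only [S, compl_filter] using card_filter_ne_empty_le_sum_card (f := f)
  calc k * Fintype.card V = k * #S + k * #Sᶜ := by rw [← card_add_card_compl S, mul_add]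
    _ ≤ d * ∑ v, (f v).card + k * ∑ v, (f v).card := add_le_add hS (Nat.mul_le_mul_left k hSc)
    _ = (d + k) * ∑ v, (f v).card := (add_mul _ _ _).symm

theorem isRainbowDominating_const_univ (G : SimpleGraph V) (k : ℕ) :
    IsRainbowDominating G k fun _ => univ := fun _ hv c =>
  absurd (hv ▸ mem_univ c) (notMem_empty c)

theorem exists_isRainbowDominating_sum_card_eq_rainbowDomNum [Fintype V]
    (G : SimpleGraph V) (k : ℕ) :
    ∃ f : V → Finset (Fin k),
      IsRainbowDominating G k f ∧ rainbowDomNum G k = ∑ v, (f v).card :=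
  Nat.sInf_mem
    (s := {w | ∃ f : V → Finset (Fin k), IsRainbowDominating G k f ∧ w = ∑ v, (f v).card})
    ⟨_, fun _ => univ, isRainbowDominating_const_univ G k, rfl⟩

theorem mul_card_le_mul_rainbowDomNum [Fintype V] [DecidableRel G.Adj] {d : ℕ}
    (hreg : G.IsRegularOfDegree d) (k : ℕ) :
    k * Fintype.card V ≤ (d + k) * rainbowDomNum G k := by
  obtain ⟨f, hf, hw⟩ := exists_isRainbowDominating_sum_card_eq_rainbowDomNum G k
  exact hw ▸ hf.mul_card_le hreg

end RainbowDomination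

theorem two_rainbow_dom_four_regular_lower_bound {V : Type*} [Fintype V] (G : SimpleGraph V)
    [DecidableRel G.Adj] (hreg : G.IsRegularOfDegree 4) :
    (Fintype.card V : ℚ) / 3 ≤ rainbowDomNum G 2 := by
  have h : 2 * Fintype.card V ≤ (4 + 2) * rainbowDomNum G 2 :=
    mul_card_le_mul_rainbowDomNum hreg 2
  rw [div_le_iff₀ three_pos]
  exact_mod_cast (by omega : Fintype.card V ≤ rainbowDomNum G 2 * 3)
end

section
/- Let f be a 2-rainbow dominating function of C_m □ C_n of minimum weight, write m = 3k + ℓ with ℓ ≡ m (mod 3), ℓ ∈ {0,1,2}, and let s_i denote the weight of f on the i-th column. Fix i, let s_min = min{s_{i-1}, s_{i+1}} and s_max = max{s_{i-1}, s_{i+1}}. If k ≥ s_min, then s_max ≥ 2m − 4·s_i − s_min ≥ 5k + 2ℓ − 4·s_i. -/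
/-!
A vertex with empty label sees both colours among its neighbours, so every vertex `v` satisfies
`2 ≤ 2 |f v| + ∑_{u ∼ v} |f u|`. Summing this over column `j` of `C_m □ C_n`, where the two
vertical neighbours contribute `2 s_j`, gives `2m ≤ s_{j-1} + s_{j+1} + 4 s_j`; with `m = 3k + ℓ`
and `s_min ≤ k` both inequalities follow.
-/

open SimpleGraph Finset

lemma eq_sub_one_or_eq_add_one_of_cycleGraph_adj {n : ℕ} [NeZero n] {u v : Fin n}
    (h : (cycleGraph n).Adj u v) : v = u - 1 ∨ v = u + 1 := by
  obtain _ | _ | n := n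
  · exact u.elim0
  · exact absurd h cycleGraph_one_adj
  · have hv : v ∈ (cycleGraph (n + 2)).neighborSet u := h
    simpa [cycleGraph_neighborSet] using hv

lemma IsRainbowDominating.le_mul_card_add_sum {V ι : Type*} [Fintype ι] {G : SimpleGraph V}
    {k : ℕ} {f : V → Finset (Fin k)} (hf : IsRainbowDominating G k f) (v : V) (p : ι → V)
    (hp : ∀ u, G.Adj v u → ∃ t, p t = u) :
    k ≤ k * #(f v) + ∑ t, #(f (p t)) := by
  by_cases hv : f v = ∅
  · have hcover : (univ : Finset (Fin k)) ⊆ univ.biUnion (fun t => f (p t)) := by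
      intro c _
      obtain ⟨u, hadj, hc⟩ := hf v hv c
      obtain ⟨t, rfl⟩ := hp u hadj
      exact mem_biUnion.mpr ⟨t, mem_univ t, hc⟩
    calc k = #(univ : Finset (Fin k)) := (card_fin k).symm
      _ ≤ ∑ t, #(f (p t)) := (card_le_card hcover).trans card_biUnion_le
      _ ≤ _ := Nat.le_add_left _ _
  · have hpos : 0 < #(f v) := card_pos.mpr (nonempty_iff_ne_empty.mpr hv)
    exact le_add_right (Nat.le_mul_of_pos_right k hpos)

lemma IsRainbowDominating.mul_le_column_sums {m n k : ℕ} [NeZero n]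
    {f : Fin m × Fin n → Finset (Fin k)}
    (hf : IsRainbowDominating (cycleGraph m □ cycleGraph n) k f) (j : Fin n) :
    k * m ≤ ∑ i, #(f (i, j - 1)) + ∑ i, #(f (i, j + 1)) + (k + 2) * ∑ i, #(f (i, j)) := by
  obtain rfl | hm := Nat.eq_zero_or_pos m
  · simp
  have : NeZero m := ⟨hm.ne'⟩
  have hlocal (i : Fin m) : k ≤ k * #(f (i, j)) + (#(f (i - 1, j)) + #(f (i + 1, j)) +
      #(f (i, j - 1)) + #(f (i, j + 1))) := by
    have hle := hf.le_mul_card_add_sum (i, j) ![(i - 1, j), (i + 1, j), (i, j - 1), (i, j + 1)]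
      fun u hadj => ?_
    · rwa [Fin.sum_univ_four] at hle
    rcases boxProd_adj.mp hadj with ⟨hi, hj⟩ | ⟨hj, hi⟩
    · rcases eq_sub_one_or_eq_add_one_of_cycleGraph_adj hi with h | h
      · exact ⟨0, Prod.ext h.symm hj⟩
      · exact ⟨1, Prod.ext h.symm hj⟩
    · rcases eq_sub_one_or_eq_add_one_of_cycleGraph_adj hj with h | h
      · exact ⟨2, Prod.ext hi h.symm⟩
      · exact ⟨3, Prod.ext hi h.symm⟩
  have hsub : ∑ i : Fin m, #(f (i - 1, j)) = ∑ i, #(f (i, j)) :=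
    Equiv.sum_comp (Equiv.subRight 1) (fun i => #(f (i, j)))
  have hadd : ∑ i : Fin m, #(f (i + 1, j)) = ∑ i, #(f (i, j)) :=
    Equiv.sum_comp (Equiv.addRight 1) (fun i => #(f (i, j)))
  have hsum := sum_le_sum fun i (_ : i ∈ univ) => hlocal i
  simp only [sum_const, card_univ, Fintype.card_fin, smul_eq_mul, sum_add_distrib, ← mul_sum,
    hsub, hadd] at hsum
  linarith

theorem column_weight_ineq_minmax_general (m n k ℓ : ℕ) [NeZero n]
    (hkl : m = 3 * k + ℓ)
    (f : Fin m × Fin n → Finset (Fin 2))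
    (hf : IsRainbowDominating (cycleGraph m □ cycleGraph n) 2 f)
    (s : Fin n → ℕ) (hs : ∀ j, s j = ∑ i : Fin m, (f (i, j)).card) (j : Fin n)
    (hk : min (s (j - 1)) (s (j + 1)) ≤ k) :
    (max (s (j - 1)) (s (j + 1)) : ℤ) ≥ 2 * m - 4 * s j - min (s (j - 1)) (s (j + 1)) ∧
      2 * (m : ℤ) - 4 * s j - min (s (j - 1)) (s (j + 1)) ≥ 5 * k + 2 * ℓ - 4 * s j := by
  have hcolumns := hf.mul_le_column_sums j
  rw [← hs, ← hs, ← hs] at hcolumns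
  omega

theorem column_weight_ineq_minmax (m n k ℓ : ℕ) [NeZero n] (hm : 3 ≤ m) (hn : 3 ≤ n)
    (hkl : m = 3 * k + ℓ) (hℓ : ℓ < 3)
    (f : Fin m × Fin n → Finset (Fin 2))
    (hf : IsRainbowDominating (cycleGraph m □ cycleGraph n) 2 f)
    (hmin : ∑ v, (f v).card = rainbowDomNum (cycleGraph m □ cycleGraph n) 2)
    (s : Fin n → ℕ) (hs : ∀ j, s j = ∑ i : Fin m, (f (i, j)).card) (j : Fin n)
    (hk : min (s (j - 1)) (s (j + 1)) ≤ k) :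
    (max (s (j - 1)) (s (j + 1)) : ℤ) ≥ 2 * m - 4 * s j - min (s (j - 1)) (s (j + 1)) ∧
      2 * (m : ℤ) - 4 * s j - min (s (j - 1)) (s (j + 1)) ≥ 5 * k + 2 * ℓ - 4 * s j :=
  column_weight_ineq_minmax_general m n k ℓ hkl f hf s hs j hk
end

section
/- Let m ≡ 1 (mod 3) with m = 3k + 1, m ≥ 4, and let n ≡ 0 (mod 6), n ≥ 6. Then γ_{r2}(C_m □ C_n) ≤ k·n + n. -/
/-!
Label the vertex `(i, j)` of a row `i < 3k` by the colour `i mod 2` when `i + j ≡ 0 (mod 3)`,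
and label every vertex of the last row `3k`. Each of the first `3k` rows then has weight
`n / 3` and the last row weight `n`. An unlabelled vertex `(i, j)` has a horizontal neighbour
on its row's diagonal, of colour `i mod 2` (the diagonals close up around `C_n` since `3 ∣ n`),
and a vertical neighbour of colour `i + 1 mod 2`: on a neighbouring diagonal, or in the last
row, whose colours are chosen to complement rows `0` and `3k - 1`.
-/

open SimpleGraph Finset

theorem IsRainbowDominating.rainbowDomNum_le {V : Type*} [Fintype V] {G : SimpleGraph V}
    {k : ℕ} {f : V → Finset (Fin k)} (hf : IsRainbowDominating G k f) :
    rainbowDomNum G k ≤ ∑ v, (f v).card :=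
  Nat.sInf_le ⟨f, hf, rfl⟩

theorem SimpleGraph.cycleGraph_adj_add_one {n : ℕ} [NeZero n] (hn : 2 ≤ n) (v : Fin n) :
    (cycleGraph n).Adj v (v + 1) := by
  rw [cycleGraph_adj', add_sub_cancel_left, Fin.val_one', Nat.mod_eq_of_lt hn]
  exact Or.inr rfl

theorem SimpleGraph.cycleGraph_adj_sub_one {n : ℕ} [NeZero n] (hn : 2 ≤ n) (v : Fin n) :
    (cycleGraph n).Adj v (v - 1) := by
  simpa using (cycleGraph_adj_add_one hn (v - 1)).symm

theorem Fin.val_add_one_mod_of_dvd {n d : ℕ} [NeZero n] (hd : d ∣ n) (b : Fin n) :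
    ((b + 1 : Fin n) : ℕ) % d = ((b : ℕ) + 1) % d := by
  rw [Fin.val_add, Fin.val_one', Nat.mod_mod_of_dvd _ hd, Nat.add_mod, Nat.mod_mod_of_dvd 1 hd,
    ← Nat.add_mod]

theorem Fin.val_sub_one_add_one_mod_of_dvd {n d : ℕ} [NeZero n] (hd : d ∣ n) (b : Fin n) :
    (((b - 1 : Fin n) : ℕ) + 1) % d = (b : ℕ) % d := by
  simpa using (Fin.val_add_one_mod_of_dvd hd (b - 1)).symm

theorem sum_range_ite_add_mod_three_eq_zero (a t : ℕ) :
    ∑ b ∈ range (3 * t), (if (a + b) % 3 = 0 then 1 else 0) = t := by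
  induction t with
  | zero => simp
  | succ t ih =>
    rw [show 3 * (t + 1) = 3 * t + 1 + 1 + 1 by ring, sum_range_succ, sum_range_succ,
      sum_range_succ, ih]
    split_ifs <;> omega

def diagonalLabelling (k n : ℕ) (v : Fin (3 * k + 1) × Fin n) : Finset (Fin 2) :=
  if (v.1 : ℕ) < 3 * k then
    if ((v.1 : ℕ) + v.2) % 3 = 0 then {Fin.ofNat 2 v.1} else ∅
  else if (v.2 : ℕ) % 3 = 0 then {Fin.ofNat 2 k} else {1}

namespace diagonalLabelling

variable {k n : ℕ}

theorem sum_card_row_of_lt (t : ℕ) {a : Fin (3 * k + 1)} (ha : (a : ℕ) < 3 * k) :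
    ∑ b, (diagonalLabelling k (3 * t) (a, b)).card = t := by
  have hcard (b : Fin (3 * t)) : (diagonalLabelling k (3 * t) (a, b)).card =
      if ((a : ℕ) + b) % 3 = 0 then 1 else 0 := by
    simp only [diagonalLabelling, if_pos ha]
    split_ifs <;> rfl
  simp only [hcard]
  exact (Fin.sum_univ_eq_sum_range (fun b => if ((a : ℕ) + b) % 3 = 0 then 1 else 0) _).trans
    (sum_range_ite_add_mod_three_eq_zero _ _)

theorem sum_card_row_last :
    ∑ b, (diagonalLabelling k n (Fin.last (3 * k), b)).card = n := by
  have hcard (b : Fin n) : (diagonalLabelling k n (Fin.last (3 * k), b)).card = 1 := by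
    simp only [diagonalLabelling, Fin.val_last, lt_irrefl, if_false]
    split_ifs <;> rfl
  simp [hcard]

theorem sum_card (hn : 3 ∣ n) : ∑ v, (diagonalLabelling k n v).card = (k + 1) * n := by
  obtain ⟨t, rfl⟩ := hn
  rw [Fintype.sum_prod_type, Fin.sum_univ_castSucc, sum_card_row_last]
  simp only [sum_card_row_of_lt t (Fin.castSucc_lt_last _), sum_const, card_univ,
    Fintype.card_fin, smul_eq_mul]
  ring

theorem eq_empty_iff {a : Fin (3 * k + 1)} {b : Fin n} :
    diagonalLabelling k n (a, b) = ∅ ↔ (a : ℕ) < 3 * k ∧ ((a : ℕ) + b) % 3 ≠ 0 := by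
  simp only [diagonalLabelling]
  split_ifs <;> simp_all

theorem exists_adj_eq_self (hn : 3 ∣ n) {a : Fin (3 * k + 1)} {b : Fin n}
    (hab : diagonalLabelling k n (a, b) = ∅) :
    ∃ u, (cycleGraph (3 * k + 1) □ cycleGraph n).Adj (a, b) u ∧
      diagonalLabelling k n u = {Fin.ofNat 2 a} := by
  obtain ⟨ha, hab⟩ := eq_empty_iff.1 hab
  have : NeZero n := ⟨b.pos.ne'⟩
  have hn2 : 2 ≤ n := by have := Nat.le_of_dvd b.pos hn; omega
  have hlabel {b' : Fin n} (h : ((a : ℕ) + b') % 3 = 0) :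
      diagonalLabelling k n (a, b') = {Fin.ofNat 2 a} := by
    simp [diagonalLabelling, ha, h]
  rcases (by omega : ((a : ℕ) + b) % 3 = 1 ∨ ((a : ℕ) + b) % 3 = 2) with h | h
  · refine ⟨(a, b - 1), boxProd_adj_right.2 (cycleGraph_adj_sub_one hn2 b), hlabel ?_⟩
    have := Fin.val_sub_one_add_one_mod_of_dvd hn b
    omega
  · refine ⟨(a, b + 1), boxProd_adj_right.2 (cycleGraph_adj_add_one hn2 b), hlabel ?_⟩
    have := Fin.val_add_one_mod_of_dvd hn b
    omega

theorem exists_adj_eq_succ {a : Fin (3 * k + 1)} {b : Fin n}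
    (hab : diagonalLabelling k n (a, b) = ∅) :
    ∃ u, (cycleGraph (3 * k + 1) □ cycleGraph n).Adj (a, b) u ∧
      diagonalLabelling k n u = {Fin.ofNat 2 (a + 1)} := by
  obtain ⟨ha, hab⟩ := eq_empty_iff.1 hab
  have hm2 : 2 ≤ 3 * k + 1 := by omega
  have parity {x y : ℕ} (h : x % 2 = y % 2) : Fin.ofNat 2 x = Fin.ofNat 2 y := by
    simp [Fin.ext_iff, h]
  rcases (by omega : ((a : ℕ) + b) % 3 = 1 ∨ ((a : ℕ) + b) % 3 = 2) with h | h
  · refine ⟨(a - 1, b), boxProd_adj_left.2 (cycleGraph_adj_sub_one hm2 a), ?_⟩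
    rcases eq_or_ne a 0 with rfl | ha0
    · have hb : (b : ℕ) % 3 ≠ 0 := by simp at h; omega
      simp [diagonalLabelling, hb]
    · have hval : ((a - 1 : Fin (3 * k + 1)) : ℕ) = a - 1 := by simp [Fin.coe_sub_one, ha0]
      have ha0' : (a : ℕ) ≠ 0 := Fin.val_ne_of_ne ha0
      simp only [diagonalLabelling, hval]
      rw [if_pos (by omega), if_pos (by omega), parity (y := a + 1) (by omega)]
  · refine ⟨(a + 1, b), boxProd_adj_left.2 (cycleGraph_adj_add_one hm2 a), ?_⟩
    have hval : ((a + 1 : Fin (3 * k + 1)) : ℕ) = a + 1 :=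
      Fin.val_add_one_of_lt (Fin.lt_def.2 (by simpa using ha))
    simp only [diagonalLabelling, hval]
    by_cases hlast : (a : ℕ) + 1 < 3 * k
    · rw [if_pos hlast, if_pos (by omega)]
    · rw [if_neg hlast, if_pos (by omega), parity (y := a + 1) (by omega)]

theorem isRainbowDominating (hn : 3 ∣ n) :
    IsRainbowDominating (cycleGraph (3 * k + 1) □ cycleGraph n) 2 (diagonalLabelling k n) := by
  rintro ⟨a, b⟩ hab c
  obtain ⟨u, hu, hu_eq⟩ := exists_adj_eq_self hn hab
  obtain ⟨w, hw, hw_eq⟩ := exists_adj_eq_succ hab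
  have hc : c = Fin.ofNat 2 a ∨ c = Fin.ofNat 2 (a + 1) := by
    simp only [Fin.ext_iff, Fin.val_ofNat]
    omega
  rcases hc with rfl | rfl
  · exact ⟨u, hu, by simp [hu_eq]⟩
  · exact ⟨w, hw, by simp [hw_eq]⟩

end diagonalLabelling

theorem rainbowDomNum_cycleGraph_three_mul_add_one_boxProd_le (k : ℕ) {n : ℕ} (hn : 3 ∣ n) :
    rainbowDomNum (cycleGraph (3 * k + 1) □ cycleGraph n) 2 ≤ (k + 1) * n :=
  (diagonalLabelling.isRainbowDominating hn).rainbowDomNum_le.trans_eq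
    (diagonalLabelling.sum_card hn)

theorem two_rainbow_dom_cycles_upper_mod1_general (m n k : ℕ) (hmk : m = 3 * k + 1)
    (hn6 : n % 6 = 0) :
    rainbowDomNum (cycleGraph m □ cycleGraph n) 2 ≤ k * n + n := by
  subst hmk
  calc _ ≤ (k + 1) * n := rainbowDomNum_cycleGraph_three_mul_add_one_boxProd_le k (by omega)
    _ = k * n + n := by ring

theorem two_rainbow_dom_cycles_upper_mod1 (m n k : ℕ) (hm : 4 ≤ m) (hmk : m = 3 * k + 1)
    (hn : 6 ≤ n) (hn6 : n % 6 = 0) :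
    rainbowDomNum (cycleGraph m □ cycleGraph n) 2 ≤ k * n + n :=
  two_rainbow_dom_cycles_upper_mod1_general m n k hmk hn6
end
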